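/- Let ρ : ℝ → [0,∞) be integrable with ρ ∈ L¹(ℝ) ∩ L³(ℝ) and suppose ρ satisfies the one-dimensional Thomas–Fermi equation with zero chemical potential: 3κ ρ(z)² = [ Z V_0(z) − ∫ V_{0,0}(z − z') ρ(z') dz' ]_+ for almost every z (the equation satisfied by the unconstrained minimizer of the one-dimensional DSTF functional). Then ∫ ρ ≤ 2Z. -/

import Mathlib

open MeasureTheory Real ENNReal

noncomputable section

/-- Squared modulus `|φ_m(x⊥)|²` of the lowest Landau band function with angular
momentum `-m` and magnetic field strength `B`. -/
def phiSq (B : ℝ) (m : ℕ) (xp : ℝ × ℝ) : ℝ :=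
  B / (2 * π) * (1 / (Nat.factorial m : ℝ)) * (B * (xp.1 ^ 2 + xp.2 ^ 2) / 2) ^ m *
    Real.exp (-(B * (xp.1 ^ 2 + xp.2 ^ 2)) / 2)

/-- `|x|` for `x = (x⊥, z) ∈ ℝ² × ℝ`. -/
def normx (xp : ℝ × ℝ) (z : ℝ) : ℝ := Real.sqrt (xp.1 ^ 2 + xp.2 ^ 2 + z ^ 2)

/-- `V_m(z) = ∫ |φ_m(x⊥)|² / |(x⊥,z)| dx⊥`. -/
def Vm (B : ℝ) (m : ℕ) (z : ℝ) : ℝ := ∫ xp : ℝ × ℝ, phiSq B m xp / normx xp z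

/-- `V_{m,n}(w) = ∬ |φ_m(x⊥)|²|φ_n(x⊥')|²/|(x⊥ - x⊥', w)| dx⊥ dx⊥'`. -/
def Vmn (B : ℝ) (m n : ℕ) (w : ℝ) : ℝ :=
  ∫ xp : ℝ × ℝ, ∫ yp : ℝ × ℝ,
    phiSq B m xp * phiSq B n yp / normx (xp.1 - yp.1, xp.2 - yp.2) w

/-- `κ = π²/3`. -/
def kappa : ℝ := π ^ 2 / 3

/-- Repulsion energy `D̄(ρ,ρ)` of a sequence of one-dimensional densities. -/
def Dbar (B : ℝ) (ρ : ℕ → ℝ → ℝ) : ℝ :=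
  (1 / 2) * ∑' m : ℕ, ∑' n : ℕ, ∫ z : ℝ, ∫ z' : ℝ, Vmn B m n (z - z') * ρ m z * ρ n z'

/-- The DSTF functional. -/
def EDSTF (B Z : ℝ) (ρ : ℕ → ℝ → ℝ) : ℝ :=
  (∑' m : ℕ, (kappa * ∫ z : ℝ, ρ m z ^ 3 - Z * ∫ z : ℝ, Vm B m z * ρ m z)) + Dbar B ρ

/-- The domain `D` of the DSTF functional: sequences of nonnegative measurable
functions with `Σ_m ∫ρ_m³ < ∞`, `Σ_m ∫ V_m ρ_m < ∞` and `D̄(ρ,ρ) < ∞`. -/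
structure MemD (B : ℝ) (ρ : ℕ → ℝ → ℝ) : Prop where
  meas : ∀ m, Measurable (ρ m)
  nonneg : ∀ m z, 0 ≤ ρ m z
  cube_int : ∀ m, Integrable (fun z => ρ m z ^ 3)
  cube_sum : Summable (fun m => ∫ z : ℝ, ρ m z ^ 3)
  pot_int : ∀ m, Integrable (fun z => Vm B m z * ρ m z)
  pot_sum : Summable (fun m => ∫ z : ℝ, Vm B m z * ρ m z)
  rep_int : ∀ m n, Integrable (fun p : ℝ × ℝ => Vmn B m n (p.1 - p.2) * ρ m p.1 * ρ n p.2)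
  rep_sum : Summable (fun p : ℕ × ℕ =>
    ∫ z : ℝ, ∫ z' : ℝ, Vmn B p.1 p.2 (z - z') * ρ p.1 z * ρ p.2 z')

/-- Total particle number `Σ_m ∫ ρ_m` of a sequence of 1D densities. -/
def massD (ρ : ℕ → ℝ → ℝ) : ℝ := ∑' m : ℕ, ∫ z : ℝ, ρ m z

/-- The particle number of `ρ` is a well-defined (finite) quantity. -/
def HasMass (ρ : ℕ → ℝ → ℝ) : Prop :=
  (∀ m, Integrable (ρ m)) ∧ Summable (fun m => ∫ z : ℝ, ρ m z)

/-- The DSTF ground state energy `E^DSTF(N,Z,B)` with particle number at most `N`. -/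
def EDSTFinf (N Z B : ℝ) : ℝ :=
  sInf { e | ∃ ρ, MemD B ρ ∧ HasMass ρ ∧ massD ρ ≤ N ∧ e = EDSTF B Z ρ }

/-- Indicator `χ_m` of the annulus `√(2m/B) ≤ |x⊥| ≤ √(2(m+1)/B)`. -/
def chiA (B : ℝ) (m : ℕ) (xp : ℝ × ℝ) : ℝ :=
  if Real.sqrt (2 * m / B) ≤ Real.sqrt (xp.1 ^ 2 + xp.2 ^ 2) ∧
      Real.sqrt (xp.1 ^ 2 + xp.2 ^ 2) ≤ Real.sqrt (2 * (m + 1) / B) then 1 else 0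

/-- `Ṽ(x) = Σ_m χ_m(x⊥) V_m(z)`. -/
def Vtilde (B : ℝ) (x : (ℝ × ℝ) × ℝ) : ℝ := ∑' m : ℕ, chiA B m x.1 * Vm B m x.2

/-- The modified repulsion energy `D̃(ρ,ρ)` for a three-dimensional density. -/
def Dtilde (B : ℝ) (ρ : (ℝ × ℝ) × ℝ → ℝ) : ℝ :=
  (1 / 2) * ∑' m : ℕ, ∑' n : ℕ, ∫ x : (ℝ × ℝ) × ℝ, ∫ y : (ℝ × ℝ) × ℝ,
    Vmn B m n (x.2 - y.2) * chiA B m x.1 * chiA B n y.1 * ρ x * ρ y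

/-- The MSTF functional. -/
def EMSTF (B Z : ℝ) (ρ : (ℝ × ℝ) × ℝ → ℝ) : ℝ :=
  4 * π ^ 4 / (3 * B ^ 2) * (∫ x : (ℝ × ℝ) × ℝ, ρ x ^ 3)
    - Z * (∫ x : (ℝ × ℝ) × ℝ, Vtilde B x * ρ x) + Dtilde B ρ

/-- The domain `D̃` of the MSTF functional. -/
structure MemDt (B : ℝ) (ρ : (ℝ × ℝ) × ℝ → ℝ) : Prop where
  meas : Measurable ρ
  nonneg : ∀ x, 0 ≤ ρ x
  lp3 : MemLp ρ 3 (volume : Measure ((ℝ × ℝ) × ℝ))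
  pot_int : Integrable (fun x : (ℝ × ℝ) × ℝ => Vtilde B x * ρ x)
  rep_int : ∀ m n, Integrable (fun p : ((ℝ × ℝ) × ℝ) × ((ℝ × ℝ) × ℝ) =>
    Vmn B m n (p.1.2 - p.2.2) * chiA B m p.1.1 * chiA B n p.2.1 * ρ p.1 * ρ p.2)
  rep_sum : Summable (fun p : ℕ × ℕ => ∫ x : (ℝ × ℝ) × ℝ, ∫ y : (ℝ × ℝ) × ℝ,
    Vmn B p.1 p.2 (x.2 - y.2) * chiA B p.1 x.1 * chiA B p.2 y.1 * ρ x * ρ y)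

/-- The MSTF ground state energy `E^MSTF(N,Z,B)` with particle number at most `N`. -/
def EMSTFinf (N Z B : ℝ) : ℝ :=
  sInf { e | ∃ ρ, MemDt B ρ ∧ Integrable ρ ∧ (∫ x : (ℝ × ℝ) × ℝ, ρ x) ≤ N ∧ e = EMSTF B Z ρ }

/-- The one-dimensional DSTF functional (angular momentum channel `m = 0`). -/
def E1DSTF (B Z : ℝ) (ρ : ℝ → ℝ) : ℝ :=
  kappa * (∫ z : ℝ, ρ z ^ 3) - Z * (∫ z : ℝ, Vm B 0 z * ρ z)
    + (1 / 2) * ∫ z : ℝ, ∫ z' : ℝ, Vmn B 0 0 (z - z') * ρ z * ρ z'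

/-- The one-dimensional functional without the repulsion term. -/
def E1Dw (B Z : ℝ) (ρ : ℝ → ℝ) : ℝ :=
  kappa * (∫ z : ℝ, ρ z ^ 3) - Z * (∫ z : ℝ, Vm B 0 z * ρ z)

/-- Admissible densities for the 1D theory: all three terms of the functional finite. -/
structure Adm1 (B : ℝ) (ρ : ℝ → ℝ) : Prop where
  meas : Measurable ρ
  nonneg : ∀ z, 0 ≤ ρ z
  cube_int : Integrable (fun z => ρ z ^ 3)
  pot_int : Integrable (fun z => Vm B 0 z * ρ z)
  rep_int : Integrable (fun p : ℝ × ℝ => Vmn B 0 0 (p.1 - p.2) * ρ p.1 * ρ p.2)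

/-- Absolute minimum `Ē^{1DSTF}(Z,B)` of the 1D DSTF functional. -/
def Ebar1DSTF (Z B : ℝ) : ℝ := sInf { e | ∃ ρ, Adm1 B ρ ∧ e = E1DSTF B Z ρ }

/-- `E^{1D}_w(Z,B)`: infimum of the 1D functional without repulsion over `Adm1`. -/
def E1Dwinf (Z B : ℝ) : ℝ := sInf { e | ∃ ρ, Adm1 B ρ ∧ e = E1Dw B Z ρ }

/-- Admissible densities for the functional without repulsion:
nonnegative with `∫ρ³ < ∞` and `∫ V₀ ρ < ∞`. -/
structure Adm1w (B : ℝ) (ρ : ℝ → ℝ) : Prop where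
  meas : Measurable ρ
  nonneg : ∀ z, 0 ≤ ρ z
  cube_int : Integrable (fun z => ρ z ^ 3)
  pot_int : Integrable (fun z => Vm B 0 z * ρ z)

/-- `E^{1D}_w(Z,B)` as infimum over `Adm1w`. -/
def E1DwinfW (Z B : ℝ) : ℝ := sInf { e | ∃ ρ, Adm1w B ρ ∧ e = E1Dw B Z ρ }



/-!
Averaging the Coulomb kernel over the two Gaussians of `V_{0,0}` convolves them into a single
Gaussian of doubled variance, so `V_{0,0}` is `V_0` for the field `B/2`; by the scaling
`V_0^{B/c²}(c z) = V_0^B(z)/c` this gives `V_0(z) ≤ 2 V_{0,0}(z - z')` whenever `|z'| < |z|`.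
Hence if the mass `N(R)` of `ρ` in `[-R, R]` exceeds `2Z`, its repulsion beats the nuclear
attraction `Z V_0(z)` at every `|z| > R`, and the Thomas–Fermi equation forces `ρ = 0` there.
Taking `R₀` the largest radius with `N(R₀) ≤ 2Z`, all the mass lies in `[-R₀, R₀]` by continuity
of `N`, so `∫ ρ = N(R₀) ≤ 2Z`.
-/

lemma phiSq_zero_eq (B : ℝ) (v : ℝ × ℝ) :
    phiSq B 0 v = B / (2 * π) * (exp (-(B / 2) * v.1 ^ 2) * exp (-(B / 2) * v.2 ^ 2)) := by
  rw [← exp_add]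
  simp only [phiSq, Nat.factorial_zero, Nat.cast_one, div_one, pow_zero, mul_one]
  ring_nf

lemma phiSq_zero_nonneg {B : ℝ} (hB : 0 ≤ B) (v : ℝ × ℝ) : 0 ≤ phiSq B 0 v := by
  rw [phiSq_zero_eq]; positivity

lemma continuous_phiSq_zero (B : ℝ) : Continuous (phiSq B 0) := by
  simp_rw [funext (phiSq_zero_eq B)]; fun_prop

lemma integrable_phiSq_zero {B : ℝ} (hB : 0 < B) : Integrable (phiSq B 0) := by
  have h := ((integrable_exp_neg_mul_sq (half_pos hB)).mul_prod
    (integrable_exp_neg_mul_sq (half_pos hB))).const_mul (B / (2 * π))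
  rw [← Measure.volume_eq_prod] at h
  simpa only [← phiSq_zero_eq] using h

lemma abs_le_normx (v : ℝ × ℝ) (z : ℝ) : |z| ≤ normx v z := by
  rw [← sqrt_sq_eq_abs]
  exact sqrt_le_sqrt (by nlinarith [sq_nonneg v.1, sq_nonneg v.2])

lemma normx_pos (v : ℝ × ℝ) {z : ℝ} (hz : z ≠ 0) : 0 < normx v z :=
  (abs_pos.mpr hz).trans_le (abs_le_normx v z)

lemma continuous_normx (z : ℝ) : Continuous (fun v => normx v z) := by
  unfold normx; fun_prop

lemma norm_div_normx_le {a : ℝ} (ha : 0 ≤ a) (v : ℝ × ℝ) {z : ℝ} (hz : z ≠ 0) :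
    ‖a / normx v z‖ ≤ a / |z| := by
  rw [norm_div, norm_of_nonneg ha, norm_of_nonneg (normx_pos v hz).le]
  exact div_le_div_of_nonneg_left ha (abs_pos.mpr hz) (abs_le_normx v z)

lemma integrable_phiSq_zero_div_normx {B : ℝ} (hB : 0 < B) {z : ℝ} (hz : z ≠ 0) :
    Integrable (fun v => phiSq B 0 v / normx v z) :=
  (integrable_phiSq_zero hB).div_const |z| |>.mono'
    ((continuous_phiSq_zero B).div (continuous_normx z)
      fun v => (normx_pos v hz).ne').aestronglyMeasurable
    (ae_of_all _ fun v => norm_div_normx_le (phiSq_zero_nonneg hB.le v) v hz)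

lemma Vm_zero_pos {B : ℝ} (hB : 0 < B) {z : ℝ} (hz : z ≠ 0) : 0 < Vm B 0 z := by
  refine integral_pos_of_integrable_nonneg_nonzero (x := 0)
    ((continuous_phiSq_zero B).div (continuous_normx z) fun v => (normx_pos v hz).ne')
    (integrable_phiSq_zero_div_normx hB hz)
    (fun v => div_nonneg (phiSq_zero_nonneg hB.le v) (normx_pos v hz).le) ?_
  rw [phiSq_zero_eq]
  exact (div_pos (by positivity) (normx_pos 0 hz)).ne'

lemma normx_le_mul_normx {c : ℝ} (hc : 1 ≤ c) (v : ℝ × ℝ) {z z' : ℝ} (h : |z'| ≤ c * |z|) :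
    normx v z' ≤ c * normx v z := by
  have hz' : z' ^ 2 ≤ c ^ 2 * z ^ 2 := by
    rw [← sq_abs z', ← sq_abs z, ← mul_pow]
    exact pow_le_pow_left₀ (abs_nonneg _) h 2
  have hv : v.1 ^ 2 + v.2 ^ 2 ≤ c ^ 2 * (v.1 ^ 2 + v.2 ^ 2) :=
    le_mul_of_one_le_left (by positivity) (one_le_pow₀ hc)
  rw [normx, normx, ← sqrt_sq (zero_le_one.trans hc), ← sqrt_mul (by positivity)]
  exact sqrt_le_sqrt (by linarith)

lemma Vm_zero_le_mul {B : ℝ} (hB : 0 < B) {c z z' : ℝ} (hc : 1 ≤ c) (hz' : z' ≠ 0)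
    (h : |z'| ≤ c * |z|) : Vm B 0 z ≤ c * Vm B 0 z' := by
  have hz : z ≠ 0 := by
    rintro rfl
    simp only [abs_zero, mul_zero, abs_nonpos_iff] at h
    exact hz' h
  rw [Vm, Vm, ← integral_const_mul]
  refine integral_mono (integrable_phiSq_zero_div_normx hB hz)
    ((integrable_phiSq_zero_div_normx hB hz').const_mul c) fun v => ?_
  rw [← mul_div_assoc, le_div_iff₀ (normx_pos v hz'), div_mul_eq_mul_div,
    div_le_iff₀ (normx_pos v hz), mul_comm c, mul_assoc]
  exact mul_le_mul_of_nonneg_left (normx_le_mul_normx hc v h) (phiSq_zero_nonneg hB.le v)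

lemma Vm_zero_div_sq_mul (B : ℝ) {c : ℝ} (hc : 0 < c) (z : ℝ) :
    Vm (B / c ^ 2) 0 (c * z) = Vm B 0 z / c := by
  have h := Measure.integral_comp_smul (volume : Measure (ℝ × ℝ))
    (fun u => phiSq (B / c ^ 2) 0 u / normx u (c * z)) c
  have hpoint : ∀ v : ℝ × ℝ,
      phiSq (B / c ^ 2) 0 (c • v) / normx (c • v) (c * z) = phiSq B 0 v / normx v z / c ^ 3 := by
    intro v
    have hn : normx (c • v) (c * z) = c * normx v z := by
      simp only [normx, Prod.smul_fst, Prod.smul_snd, smul_eq_mul]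
      rw [show (c * v.1) ^ 2 + (c * v.2) ^ 2 + (c * z) ^ 2 = c ^ 2 * (v.1 ^ 2 + v.2 ^ 2 + z ^ 2)
        by ring, sqrt_mul (sq_nonneg c), sqrt_sq hc.le]
    rw [hn, phiSq_zero_eq, phiSq_zero_eq]
    simp only [Prod.smul_fst, Prod.smul_snd, smul_eq_mul]
    field_simp
  simp only [hpoint, Module.finrank_prod, Module.finrank_self] at h
  rw [integral_div, abs_of_pos (by positivity), smul_eq_mul] at h
  rw [Vm, Vm]
  field_simp at h
  rw [eq_div_iff hc.ne']
  refine mul_right_cancel₀ (pow_ne_zero 2 hc.ne') ?_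
  linear_combination -h

lemma integral_exp_neg_mul_sq_mul_exp_neg_mul_add_sq (b s : ℝ) :
    ∫ t, exp (-b * t ^ 2) * exp (-b * (t + s) ^ 2) = √(π / (2 * b)) * exp (-b * s ^ 2 / 2) := by
  have hsq : ∀ t, exp (-b * t ^ 2) * exp (-b * (t + s) ^ 2)
      = exp (-b * s ^ 2 / 2) * exp (-(2 * b) * (t + s / 2) ^ 2) := fun t => by
    rw [← exp_add, ← exp_add]; ring_nf
  simp_rw [hsq]
  rw [integral_const_mul, integral_add_right_eq_self (fun t => exp (-(2 * b) * t ^ 2)),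
    integral_gaussian, mul_comm]

lemma integral_phiSq_zero_mul_phiSq_zero_add {B : ℝ} (hB : 0 < B) (v : ℝ × ℝ) :
    ∫ x, phiSq B 0 x * phiSq B 0 (v + x) = phiSq (B / 2) 0 v := by
  have hsplit : ∀ x : ℝ × ℝ, phiSq B 0 x * phiSq B 0 (v + x) = (B / (2 * π)) ^ 2 *
      ((exp (-(B / 2) * x.1 ^ 2) * exp (-(B / 2) * (x.1 + v.1) ^ 2)) *
        (exp (-(B / 2) * x.2 ^ 2) * exp (-(B / 2) * (x.2 + v.2) ^ 2))) := fun x => by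
    simp only [phiSq_zero_eq, Prod.fst_add, Prod.snd_add, add_comm v.1, add_comm v.2]
    ring
  simp_rw [hsplit]
  rw [integral_const_mul, Measure.volume_eq_prod, integral_prod_mul (L := ℝ)
    (fun t => exp (-(B / 2) * t ^ 2) * exp (-(B / 2) * (t + v.1) ^ 2))
    (fun t => exp (-(B / 2) * t ^ 2) * exp (-(B / 2) * (t + v.2) ^ 2)),
    integral_exp_neg_mul_sq_mul_exp_neg_mul_add_sq,
    integral_exp_neg_mul_sq_mul_exp_neg_mul_add_sq, phiSq_zero_eq]
  field_simp
  rw [sq_sqrt (by positivity)]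
  field_simp

lemma Vmn_zero_zero_eq_Vm_half {B : ℝ} (hB : 0 < B) {w : ℝ} (hw : w ≠ 0) :
    Vmn B 0 0 w = Vm (B / 2) 0 w := by
  have hnormx : ∀ x v : ℝ × ℝ, normx (x.1 - (v + x).1, x.2 - (v + x).2) w = normx v w :=
    fun x v => by simp [normx]
  have hshift : ∀ x : ℝ × ℝ, ∫ y, phiSq B 0 x * phiSq B 0 y / normx (x.1 - y.1, x.2 - y.2) w
      = ∫ v, phiSq B 0 x * phiSq B 0 (v + x) / normx v w := fun x => by
    rw [← integral_add_right_eq_self _ x]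
    simp_rw [hnormx]
  have hG : Integrable (fun p : (ℝ × ℝ) × (ℝ × ℝ) =>
      phiSq B 0 p.1 * phiSq B 0 p.2 / normx (p.1.1 - p.2.1, p.1.2 - p.2.2) w)
      (volume.prod volume) := by
    refine ((integrable_phiSq_zero hB).mul_prod (integrable_phiSq_zero hB)).div_const |w| |>.mono'
      (by apply Continuous.aestronglyMeasurable
          exact ((continuous_phiSq_zero B).comp continuous_fst).mul
            ((continuous_phiSq_zero B).comp continuous_snd) |>.div
            ((continuous_normx w).comp (by fun_prop)) fun p => (normx_pos _ hw).ne')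
      (ae_of_all _ fun p => norm_div_normx_le
        (mul_nonneg (phiSq_zero_nonneg hB.le p.1) (phiSq_zero_nonneg hB.le p.2)) _ hw)
  have hF : Integrable (fun p : (ℝ × ℝ) × (ℝ × ℝ) =>
      phiSq B 0 p.1 * phiSq B 0 (p.2 + p.1) / normx p.2 w) (volume.prod volume) := by
    have := ((measurePreserving_prod_add_right volume volume).integrable_comp
      hG.aestronglyMeasurable).mpr hG
    refine this.congr (ae_of_all _ fun p => ?_)
    simp only [Function.comp_apply, hnormx]
  rw [Vmn]
  simp_rw [hshift]
  rw [integral_integral_swap hF, Vm]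
  simp_rw [integral_div, integral_phiSq_zero_mul_phiSq_zero_add hB]

lemma Vmn_zero_zero_nonneg {B : ℝ} (hB : 0 ≤ B) (w : ℝ) : 0 ≤ Vmn B 0 0 w :=
  integral_nonneg fun x => integral_nonneg fun y =>
    div_nonneg (mul_nonneg (phiSq_zero_nonneg hB x) (phiSq_zero_nonneg hB y)) (sqrt_nonneg _)

lemma Vm_zero_le_two_mul_Vmn_zero_zero {B : ℝ} (hB : 0 < B) {z z' : ℝ} (h : |z'| < |z|) :
    Vm B 0 z ≤ 2 * Vmn B 0 0 (z - z') := by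
  have hw : z - z' ≠ 0 := fun h0 => by rw [sub_eq_zero.mp h0] at h; exact lt_irrefl _ h
  have hs : (0 : ℝ) < √2 := by positivity
  have hscale := Vm_zero_div_sq_mul B hs ((z - z') / √2)
  rw [sq_sqrt zero_le_two, mul_div_cancel₀ _ hs.ne'] at hscale
  rw [Vmn_zero_zero_eq_Vm_half hB hw, hscale]
  calc
    Vm B 0 z ≤ √2 * Vm B 0 ((z - z') / √2) := by
      refine Vm_zero_le_mul hB one_lt_sqrt_two.le (div_ne_zero hw hs.ne') ?_
      rw [abs_div, abs_of_pos hs, div_le_iff₀ hs, mul_comm, ← mul_assoc,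
        mul_self_sqrt zero_le_two]
      linarith [abs_sub z z']
    _ = 2 * (Vm B 0 ((z - z') / √2) / √2) := by
      field_simp
      rw [sq_sqrt zero_le_two, mul_comm]

section Screening

variable {V W ρ : ℝ → ℝ} {Z R : ℝ}

lemma integral_eq_intervalIntegral_of_ae_eq_zero (hR : 0 ≤ R)
    (h : ∀ᵐ z, R < |z| → ρ z = 0) : ∫ z, ρ z = ∫ z in -R..R, ρ z := by
  rw [intervalIntegral.integral_of_le (by linarith), ← integral_Icc_eq_integral_Ioc,
    setIntegral_eq_integral_of_ae_compl_eq_zero]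
  filter_upwards [h] with z hz hzR
  refine hz ?_
  rw [Set.mem_Icc, not_and_or, not_le, not_le] at hzR
  rcases hzR with hz | hz
  · rw [abs_of_neg (by linarith)]; linarith
  · rw [abs_of_pos (by linarith)]; linarith

lemma continuous_intervalIntegral_neg_self (hρi : Integrable ρ) :
    Continuous fun R => ∫ z in -R..R, ρ z := by
  have hprim := intervalIntegral.continuous_primitive (fun _ _ => hρi.intervalIntegrable) 0
  have hsub : ∀ R : ℝ, ∫ z in -R..R, ρ z = (∫ z in (0 : ℝ)..R, ρ z) - ∫ z in (0 : ℝ)..(-R), ρ z :=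
    fun R => (intervalIntegral.integral_interval_sub_left hρi.intervalIntegrable
      hρi.intervalIntegrable).symm
  simp_rw [hsub]
  exact hprim.sub (hprim.comp continuous_neg)

variable (hV : ∀ z, z ≠ 0 → 0 < V z) (hW : ∀ w, 0 ≤ W w)
  (hVW : ∀ z z', |z'| < |z| → V z ≤ 2 * W (z - z')) (hρ : ∀ z, 0 ≤ ρ z) (hρi : Integrable ρ)
  (hconv : ∀ᵐ z, Integrable fun z' => W (z - z') * ρ z')
  (hsupp : ∀ᵐ z, ρ z ≠ 0 → ∫ z', W (z - z') * ρ z' < Z * V z)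
include hV hW hVW hρ hρi hconv hsupp

lemma ae_eq_zero_of_two_mul_lt_intervalIntegral (hR : 0 ≤ R)
    (hmass : 2 * Z < ∫ z in -R..R, ρ z) : ∀ᵐ z, R < |z| → ρ z = 0 := by
  filter_upwards [hconv, hsupp] with z hcz hsz hzR
  by_contra hρz
  have hVz : 0 < V z := hV z fun h => by rw [h, abs_zero] at hzR; linarith
  have hlower : V z / 2 * ∫ x in -R..R, ρ x ≤ ∫ x, W (z - x) * ρ x := calc
    V z / 2 * ∫ x in -R..R, ρ x = ∫ x in Set.Icc (-R) R, V z / 2 * ρ x := by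
      rw [intervalIntegral.integral_of_le (by linarith), ← integral_Icc_eq_integral_Ioc,
        integral_const_mul]
    _ ≤ ∫ x in Set.Icc (-R) R, W (z - x) * ρ x := by
      refine setIntegral_mono_on ?_ hcz.integrableOn measurableSet_Icc fun x hx => ?_
      · exact (hρi.const_mul _).integrableOn
      · have hx' : |x| < |z| := (abs_le.mpr hx).trans_lt hzR
        exact mul_le_mul_of_nonneg_right (by linarith [hVW z x hx']) (hρ x)
    _ ≤ ∫ x, W (z - x) * ρ x :=
      setIntegral_le_integral hcz (ae_of_all _ fun x => mul_nonneg (hW _) (hρ x))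
  nlinarith [hsz hρz]

theorem integral_le_two_mul_of_screening (hZ : 0 ≤ Z) : ∫ z, ρ z ≤ 2 * Z := by
  set N : ℝ → ℝ := fun R => ∫ z in -R..R, ρ z
  have hN_cont : Continuous N := continuous_intervalIntegral_neg_self hρi
  have hN_lim : Filter.Tendsto N Filter.atTop (nhds (∫ z, ρ z)) :=
    intervalIntegral_tendsto_integral hρi Filter.tendsto_neg_atTop_atBot Filter.tendsto_id
  have hscreened : ∀ R, 0 ≤ R → 2 * Z < N R → ∫ z, ρ z = N R := fun R hR hmass =>
    integral_eq_intervalIntegral_of_ae_eq_zero hR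
      (ae_eq_zero_of_two_mul_lt_intervalIntegral hV hW hVW hρ hρi hconv hsupp hR hmass)
  by_contra! hmass
  obtain ⟨R₁, hR₁⟩ := Filter.eventually_atTop.mp (hN_lim.eventually (lt_mem_nhds hmass))
  set S := {R | N R ≤ 2 * Z}
  have hS_bdd : BddAbove S := ⟨R₁, fun R hR => not_lt.1 fun h => not_lt.2 hR (hR₁ R h.le)⟩
  have hS_zero : (0 : ℝ) ∈ S := by simp [S, N, hZ]
  have hS_sup : sSup S ∈ S := (isClosed_le hN_cont continuous_const).csSup_mem ⟨0, hS_zero⟩ hS_bdd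
  have hS_sup_nonneg : 0 ≤ sSup S := le_csSup hS_bdd hS_zero
  have hconst : Set.Ioi (sSup S) ⊆ {R | N R = ∫ z, ρ z} := fun R hR =>
    (hscreened R (hS_sup_nonneg.trans hR.le)
      (not_le.1 fun h => not_le.2 hR (le_csSup hS_bdd h))).symm
  have hN_sup : N (sSup S) = ∫ z, ρ z :=
    (isClosed_eq hN_cont continuous_const).closure_subset_iff.2 hconst
      (by rw [closure_Ioi]; exact Set.self_mem_Ici)
  exact (not_le.2 hmass) (hN_sup ▸ hS_sup)

end Screening

theorem stmt11_general (Z B : ℝ) (hZ : 0 < Z) (hB : 0 < B)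
    (ρ : ℝ → ℝ) (hnn : ∀ z, 0 ≤ ρ z)
    (hL1 : Integrable ρ)
    (hconv : ∀ᵐ z : ℝ ∂volume, Integrable (fun z' => Vmn B 0 0 (z - z') * ρ z'))
    (hTF : ∀ᵐ z : ℝ ∂volume,
      3 * kappa * ρ z ^ 2 =
        max (Z * Vm B 0 z - ∫ z' : ℝ, Vmn B 0 0 (z - z') * ρ z') 0) :
    (∫ z : ℝ, ρ z) ≤ 2 * Z := by
  refine integral_le_two_mul_of_screening (fun z hz => Vm_zero_pos hB hz)
    (Vmn_zero_zero_nonneg hB.le) (fun z z' h => Vm_zero_le_two_mul_Vmn_zero_zero hB h) hnn hL1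
    hconv ?_ hZ.le
  filter_upwards [hTF] with z hz hρz
  have hkappa : 0 < kappa := by unfold kappa; positivity
  have hpos : 0 < 3 * kappa * ρ z ^ 2 := by positivity
  rw [hz, lt_max_iff] at hpos
  linarith [hpos.resolve_right (lt_irrefl 0)]

/-- a solution of the one-dimensional Thomas–Fermi equation with zero
chemical potential has total mass at most `2Z`. -/
theorem stmt11 (Z B : ℝ) (hZ : 0 < Z) (hB : 0 < B)
    (ρ : ℝ → ℝ) (hmeas : Measurable ρ) (hnn : ∀ z, 0 ≤ ρ z)
    (hL1 : Integrable ρ) (hL3 : Integrable (fun z => ρ z ^ 3))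
    (hconv : ∀ᵐ z : ℝ ∂volume, Integrable (fun z' => Vmn B 0 0 (z - z') * ρ z'))
    (hTF : ∀ᵐ z : ℝ ∂volume,
      3 * kappa * ρ z ^ 2 =
        max (Z * Vm B 0 z - ∫ z' : ℝ, Vmn B 0 0 (z - z') * ρ z') 0) :
    (∫ z : ℝ, ρ z) ≤ 2 * Z :=
  stmt11_general Z B hZ hB ρ hnn hL1 hconv hTF

end
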